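/- arXiv:2304.12916 — 2 statements merged into one kernel-verified Lean document; each statement's English description precedes it below -/
import Mathlib

section
/- For the distributions p with p₁ = p₂ = 1/2 (and 0 elsewhere) and q with q₁ = (1-ε)/2, q₂ = (1+ε)/2 (and 0 elsewhere) on {1,…,n}, the Hellinger distance satisfies d_H(p,q) ≤ ε for all ε ∈ (0,1). -/
theorem stmt_4 (n : ℕ) (hn : 2 ≤ n) (ε : ℝ) (hε : 0 < ε ∧ ε < 1)
    (p q : Fin n → ℝ)
    (hp : p = fun i : Fin n => if (i : ℕ) = 0 then (1 : ℝ) / 2 else if (i : ℕ) = 1 then (1 : ℝ) / 2 else 0)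
    (hq : q = fun i : Fin n => if (i : ℕ) = 0 then (1 - ε) / 2 else if (i : ℕ) = 1 then (1 + ε) / 2 else 0) :
    Real.sqrt ((1 / 2) * ∑ i, (Real.sqrt (p i) - Real.sqrt (q i)) ^ 2) ≤ ε := by
  obtain ⟨hε0, hε1⟩ := hε
  subst hp hq
  have hsum : ∑ i : Fin n, (Real.sqrt ((fun i : Fin n => if (i : ℕ) = 0 then (1 : ℝ) / 2 else if (i : ℕ) = 1 then (1 : ℝ) / 2 else 0) i) - Real.sqrt ((fun i : Fin n => if (i : ℕ) = 0 then (1 - ε) / 2 else if (i : ℕ) = 1 then (1 + ε) / 2 else 0) i)) ^ 2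
      = (Real.sqrt (1/2) - Real.sqrt ((1-ε)/2))^2 + (Real.sqrt (1/2) - Real.sqrt ((1+ε)/2))^2 := by
    rw [Fin.sum_univ_eq_sum_range (fun k : ℕ => (Real.sqrt (if k = 0 then (1:ℝ)/2 else if k = 1 then (1:ℝ)/2 else 0) - Real.sqrt (if k = 0 then (1-ε)/2 else if k = 1 then (1+ε)/2 else 0)) ^ 2)]
    rw [← Finset.sum_subset (Finset.range_subset_range.mpr hn)]
    · simp [Finset.sum_range_succ]
    · intro x _ hx
      simp only [Finset.mem_range, not_lt] at hx
      have h0 : x ≠ 0 := by omega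
      have h1 : x ≠ 1 := by omega
      simp [h0, h1]
  rw [hsum]
  have h2 : Real.sqrt ((1-ε)/2) = Real.sqrt (1/2) * Real.sqrt (1-ε) := by
    rw [← Real.sqrt_mul (by norm_num)]; ring_nf
  have h3 : Real.sqrt ((1+ε)/2) = Real.sqrt (1/2) * Real.sqrt (1+ε) := by
    rw [← Real.sqrt_mul (by norm_num)]; ring_nf
  set a := Real.sqrt (1-ε) with ha
  set b := Real.sqrt (1+ε) with hb
  set c := Real.sqrt (1/2) with hc
  have hc2 : c^2 = 1/2 := Real.sq_sqrt (by norm_num)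
  have ha2 : a^2 = 1-ε := Real.sq_sqrt (by linarith)
  have hb2 : b^2 = 1+ε := Real.sq_sqrt (by linarith)
  have ha0 : 0 ≤ a := Real.sqrt_nonneg _
  have hb0 : 0 ≤ b := Real.sqrt_nonneg _
  have hc0 : 0 ≤ c := Real.sqrt_nonneg _
  have haL : 1 - ε ≤ a := by nlinarith [sq_nonneg (a - (1-ε))]
  have hbU : b ≤ 1 + ε/2 := by nlinarith [sq_nonneg (b - (1+ε/2))]
  have ha1 : a ≤ 1 := by nlinarith
  have hb1 : 1 ≤ b := by nlinarith
  rw [h2, h3]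
  have key : (1/2) * ((c - c*a)^2 + (c - c*b)^2) ≤ ε^2 := by nlinarith [sq_nonneg (1-a), sq_nonneg (b-1)]
  calc Real.sqrt ((1/2) * ((c - c*a)^2 + (c - c*b)^2)) ≤ Real.sqrt (ε^2) := Real.sqrt_le_sqrt key
    _ = ε := Real.sqrt_sq hε0.le
end

section
/- Let Δ, Δ' ≥ 0, ε ∈ (0,1), ν ∈ (0,1], and t = 20π/(νε). Suppose |Δ' - Δ| ≤ 2π√Δ/t + π²/t². If Δ ≤ (ε² - νε²)/4 then Δ' ≤ (1/4 - ν/8)ε², and if Δ ≥ ε²/4 then Δ' > (1/4 - ν/8)ε². -/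
open Real in
theorem stmt_12 (Δ Δ' ε ν t : ℝ)
    (hΔ : 0 ≤ Δ) (hΔ' : 0 ≤ Δ')
    (hε : 0 < ε) (hε1 : ε < 1) (hν : 0 < ν) (hν1 : ν ≤ 1)
    (ht : t = 20 * π / (ν * ε))
    (herr : |Δ' - Δ| ≤ 2 * π * Real.sqrt Δ / t + π ^ 2 / t ^ 2) :
    (Δ ≤ (ε ^ 2 - ν * ε ^ 2) / 4 → Δ' ≤ (1 / 4 - ν / 8) * ε ^ 2) ∧
    (Δ ≥ ε ^ 2 / 4 → Δ' > (1 / 4 - ν / 8) * ε ^ 2) := by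
  have hπ := Real.pi_pos
  set s := Real.sqrt Δ with hsdef
  have hs : s ^ 2 = Δ := Real.sq_sqrt hΔ
  have hs0 : 0 ≤ s := Real.sqrt_nonneg _
  have hνε : ν * ε ≠ 0 := by positivity
  have hkey : 2 * π * s / t + π ^ 2 / t ^ 2 = ν * ε * s / 10 + ν ^ 2 * ε ^ 2 / 400 := by
    rw [ht]
    field_simp
    ring
  rw [hkey] at herr
  obtain ⟨h1, h2⟩ := abs_le.mp herr
  constructor
  · intro h
    have hsle : s ≤ ε / 2 := by
      rw [hsdef, show ε / 2 = Real.sqrt ((ε / 2) ^ 2) by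
        rw [Real.sqrt_sq (by positivity)]]
      exact Real.sqrt_le_sqrt (by nlinarith)
    nlinarith [mul_le_mul_of_nonneg_left hsle (show (0:ℝ) ≤ ν * ε by positivity),
      mul_nonneg (mul_nonneg (sub_nonneg.mpr hν1) hν.le) (sq_nonneg ε),
      mul_pos hν (pow_pos hε 2)]
  · intro h
    have hsge : ε / 2 ≤ s := by
      rw [hsdef, show ε / 2 = Real.sqrt ((ε / 2) ^ 2) by
        rw [Real.sqrt_sq (by positivity)]]
      exact Real.sqrt_le_sqrt (by nlinarith)
    have hfac : 0 ≤ (s - ε / 2) * (s + ε / 2 - ν * ε / 10) := by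
      apply mul_nonneg (by linarith)
      nlinarith [mul_nonneg (sub_nonneg.mpr hν1) hε.le]
    nlinarith [hfac, mul_pos hν (pow_pos hε 2),
      mul_nonneg (mul_nonneg (sub_nonneg.mpr hν1) hν.le) (sq_nonneg ε)]
end
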